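/- Assume f and g* are merely convex (μ_f = μ_{g*} = 0), a saddle point (x⋆, y⋆) of L exists, and f* is M_{f*}-Lipschitz continuous on dom f*. Run ASGARD+ with τ₀ := 1, and for k ≥ 0 let τ_{k+1} be the unique root in (0,1) of τ³ + τ² + τ_k² τ − τ_k² = 0, β_{k+1} := β_k/(1+τ_{k+1}), L_k := ‖K‖²/β_k, m_{k+1} := L_{k+1}/L_k, η_{k+1} := (1−τ_k)τ_k/(τ_k² + m_{k+1}τ_{k+1}). Then for all k ≥ 1, D(ỹ^k) − D⋆ ≤ (‖K‖²/(2β₀k))(‖x⁰‖ + M_{f*})² + (β₀/(k+1))‖ẏ − y⋆‖². -/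

import Mathlib

/-!
One iteration of ASGARD+ is a proximal ascent step in `y` followed by a proximal descent step
in `x`. The three-point inequality for both steps, together with Young's inequality and
`L_k β_k = ‖K‖²`, bounds `L(x_{k+1}, y) - β_k/2 ‖y - ẏ‖²` by the `τ_k`-convex combination of
the same quantity at step `k - 1`, evaluated at `y = y_{k+1}`, and `L(x, y_{k+1})`, up to a
difference of squared distances from `x` to the centres `v_k = τ_k⁻¹ (x̂_k - (1 - τ_k) x_k)`.
Weighting step `k` by `w_k = L_0 / (L_k τ_k²)` makes these distances telescope, and concavity of
`L(x, ·)` collects the `y_{k+1}` into `ỹ_{k+1}`. From `τ_k ≥ 1/(k+1)` one gets `w_k ≥ k + 1`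
and `β_k ≤ 2β_0/(k+2)`. Finally take `y = y⋆`, bound `L(x_{k+1}, y⋆) ≥ -D(y⋆)` by
Fenchel–Young, and take the supremum over `x ∈ dom f`, which lies in the ball of radius `M_{f*}`
because `f*` is `M_{f*}`-Lipschitz.
-/

open RealInnerProductSpace Set Filter Topology

theorem nonneg_of_forall_mem_Ioc_nonneg_add_mul {G H : ℝ}
    (h : ∀ t ∈ Ioc (0 : ℝ) 1, 0 ≤ G + t * H) : 0 ≤ G := by
  have hlim : Tendsto (fun t : ℝ => G + t * H) (𝓝[>] 0) (𝓝 G) := by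
    have hcont : Continuous (fun t : ℝ => G + t * H) := by fun_prop
    simpa using (hcont.tendsto 0).mono_left nhdsWithin_le_nhds
  refine ge_of_tendsto hlim ?_
  filter_upwards [Ioc_mem_nhdsGT one_pos] with t ht using h t ht

/-- `t ↦ t² (1 + t) / (1 - t)` is increasing on `(0, 1)`, and at `t = 1/(r+1)` it equals
`(r + 2) / (r (r + 1)²) < 1 / r² ≤ s²`. -/
theorem one_le_add_one_mul_of_sq_mul_one_add_eq {r s t : ℝ} (hr : 1 ≤ r) (hs : 1 ≤ r * s)
    (ht : t ∈ Ioo 0 1) (h : t ^ 2 * (1 + t) = s ^ 2 * (1 - t)) : 1 ≤ (r + 1) * t := by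
  by_contra! hlt
  have hu : 0 < (r + 1) * t := mul_pos (by linarith) ht.1
  have h1 : t ^ 2 * (1 + t) * (r + 1) ^ 3 < r + 2 := by
    have : ((r + 1) * t) ^ 2 < 1 := by nlinarith
    nlinarith [ht.1]
  have h2 : r < (1 - t) * (r + 1) := by nlinarith
  have h3 : s ^ 2 * r * (r + 1) ^ 2 < r + 2 :=
    calc s ^ 2 * r * (r + 1) ^ 2 ≤ (1 - t) * (r + 1) * (s ^ 2 * (r + 1) ^ 2) := by
          linarith [mul_le_mul_of_nonneg_right h2.le (by positivity : 0 ≤ s ^ 2 * (r + 1) ^ 2)]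
      _ = t ^ 2 * (1 + t) * (r + 1) ^ 3 := by linear_combination (-(r + 1) ^ 3) * h
      _ < r + 2 := h1
  have h4 : 1 ≤ (r * s) ^ 2 := by nlinarith
  nlinarith

structure IsAsgardParams (c : ℝ) (τ β L η : ℕ → ℝ) : Prop where
  τ_zero : τ 0 = 1
  τ_succ : ∀ k, τ (k + 1) ∈ Ioo (0 : ℝ) 1 ∧
    (τ (k + 1)) ^ 3 + (τ (k + 1)) ^ 2 + (τ k) ^ 2 * τ (k + 1) - (τ k) ^ 2 = 0
  β_zero_pos : 0 < β 0
  β_succ : ∀ k, β (k + 1) = β k / (1 + τ (k + 1))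
  L_eq : ∀ k, L k = c ^ 2 / β k
  η_succ : ∀ k, η (k + 1) = (1 - τ k) * τ k / ((τ k) ^ 2 + (L (k + 1) / L k) * τ (k + 1))

/-- The weight `w k = L 0 / (L k * τ k ^ 2)` of the `k`-th step in the telescoped estimate,
written through `β` so that it is also meaningful when `L = 0`. -/
noncomputable def asgardWeight (τ β : ℕ → ℝ) (k : ℕ) : ℝ := β k / (β 0 * τ k ^ 2)

namespace IsAsgardParams

variable {c : ℝ} {τ β L η : ℕ → ℝ}

theorem τ_mem (h : IsAsgardParams c τ β L η) (k : ℕ) : τ k ∈ Ioc 0 1 := by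
  cases k with
  | zero => simp [h.τ_zero]
  | succ k => exact ⟨(h.τ_succ k).1.1, (h.τ_succ k).1.2.le⟩

theorem sq_τ_succ_mul (h : IsAsgardParams c τ β L η) (k : ℕ) :
    τ (k + 1) ^ 2 * (1 + τ (k + 1)) = τ k ^ 2 * (1 - τ (k + 1)) := by
  linear_combination (h.τ_succ k).2

theorem one_le_succ_mul_τ (h : IsAsgardParams c τ β L η) (k : ℕ) : 1 ≤ (k + 1) * τ k := by
  induction k with
  | zero => simp [h.τ_zero]
  | succ k ih =>
    push_cast
    exact one_le_add_one_mul_of_sq_mul_one_add_eq (by linarith [k.cast_nonneg (α := ℝ)]) ih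
      (h.τ_succ k).1 (h.sq_τ_succ_mul k)

theorem β_pos (h : IsAsgardParams c τ β L η) (k : ℕ) : 0 < β k := by
  induction k with
  | zero => exact h.β_zero_pos
  | succ k ih => rw [h.β_succ k]; exact div_pos ih (by linarith [(h.τ_mem (k + 1)).1])

theorem L_mul_β (h : IsAsgardParams c τ β L η) (k : ℕ) : L k * β k = c ^ 2 := by
  rw [h.L_eq, div_mul_cancel₀ _ (h.β_pos k).ne']

theorem β_eq_mul_β_succ (h : IsAsgardParams c τ β L η) (k : ℕ) :
    β k = (1 + τ (k + 1)) * β (k + 1) := by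
  rw [h.β_succ k, mul_div_cancel₀ _ (by linarith [(h.τ_mem (k + 1)).1])]

theorem one_sub_τ_succ_mul_β_le (h : IsAsgardParams c τ β L η) (k : ℕ) :
    (1 - τ (k + 1)) * β k ≤ β (k + 1) := by
  rw [h.β_eq_mul_β_succ k]
  nlinarith [h.β_pos (k + 1), sq_nonneg (τ (k + 1))]

theorem β_mul_le (h : IsAsgardParams c τ β L η) (k : ℕ) : β k * (k + 2) ≤ 2 * β 0 := by
  induction k with
  | zero => push_cast; linarith
  | succ k ih =>
    have hτ := h.one_le_succ_mul_τ (k + 1)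
    rw [h.β_eq_mul_β_succ k] at ih
    push_cast at hτ ⊢
    nlinarith [h.β_pos (k + 1)]

theorem asgardWeight_zero (h : IsAsgardParams c τ β L η) : asgardWeight τ β 0 = 1 := by
  simp [asgardWeight, h.τ_zero, h.β_zero_pos.ne']

theorem asgardWeight_pos (h : IsAsgardParams c τ β L η) (k : ℕ) : 0 < asgardWeight τ β k := by
  have := (h.τ_mem k).1
  unfold asgardWeight
  have := h.β_pos k
  have := h.β_zero_pos
  positivity

theorem asgardWeight_succ_mul (h : IsAsgardParams c τ β L η) (k : ℕ) :
    asgardWeight τ β (k + 1) * (1 - τ (k + 1)) = asgardWeight τ β k := by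
  have hτ := (h.τ_mem k).1.ne'
  have hτ' := (h.τ_mem (k + 1)).1.ne'
  have hβ := h.β_zero_pos.ne'
  unfold asgardWeight
  rw [h.β_eq_mul_β_succ k]
  field_simp
  linear_combination (-β (k + 1)) * h.sq_τ_succ_mul k

theorem succ_le_asgardWeight (h : IsAsgardParams c τ β L η) (k : ℕ) :
    (k + 1 : ℝ) ≤ asgardWeight τ β k := by
  induction k with
  | zero => simp [h.asgardWeight_zero]
  | succ k ih =>
    have hτ := h.one_le_succ_mul_τ (k + 1)
    rw [← h.asgardWeight_succ_mul k] at ih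
    push_cast at hτ ⊢
    nlinarith [h.asgardWeight_pos (k + 1)]

theorem asgardWeight_mul_L (h : IsAsgardParams c τ β L η) (k : ℕ) :
    asgardWeight τ β k * (L k * τ k ^ 2) = L 0 := by
  have := (h.τ_mem k).1.ne'
  have := (h.β_pos k).ne'
  rw [asgardWeight, h.L_eq, h.L_eq]
  field_simp

theorem η_succ_eq (h : IsAsgardParams c τ β L η) (hc : c ≠ 0) (k : ℕ) :
    η (k + 1) = (1 - τ k) * τ (k + 1) / τ k := by
  have hτ := (h.τ_mem k).1
  have hτ' := (h.τ_mem (k + 1)).1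
  have hratio : L (k + 1) / L k = 1 + τ (k + 1) := by
    have := (h.β_pos (k + 1)).ne'
    rw [h.L_eq, h.L_eq, h.β_eq_mul_β_succ k]
    field_simp
  rw [h.η_succ k, hratio, div_eq_div_iff (by positivity) hτ.ne']
  linear_combination (-(1 - τ k)) * (h.τ_succ k).2

end IsAsgardParams

section Asgard

variable {E F : Type*} [NormedAddCommGroup E] [InnerProductSpace ℝ E]
  [NormedAddCommGroup F] [InnerProductSpace ℝ F]

theorem ConvexOn.add_half_mul_sq_le_of_isMinOn {s : Set E} {φ : E → ℝ} (hφ : ConvexOn ℝ s φ)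
    {a xm z : E} {c : ℝ} (hxm : xm ∈ s)
    (hmin : IsMinOn (fun u => φ u + c / 2 * ‖u - a‖ ^ 2) s xm) (hz : z ∈ s) :
    φ xm + c / 2 * ‖xm - a‖ ^ 2 + c / 2 * ‖z - xm‖ ^ 2 ≤ φ z + c / 2 * ‖z - a‖ ^ 2 := by
  have hsplit : ‖z - a‖ ^ 2 = ‖z - xm‖ ^ 2 + 2 * ⟪z - xm, xm - a⟫ + ‖xm - a‖ ^ 2 := by
    rw [← norm_add_sq_real, sub_add_sub_cancel]
  suffices 0 ≤ φ z - φ xm + c * ⟪z - xm, xm - a⟫ by rw [hsplit]; linarith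
  refine nonneg_of_forall_mem_Ioc_nonneg_add_mul (H := c / 2 * ‖z - xm‖ ^ 2) fun t ht => ?_
  have hcomb : (1 - t) • xm + t • z = xm + t • (z - xm) := by module
  have hmem : xm + t • (z - xm) ∈ s := hφ.1.add_smul_sub_mem hxm hz ⟨ht.1.le, ht.2⟩
  have hconv : φ (xm + t • (z - xm)) ≤ (1 - t) * φ xm + t * φ z := by
    simpa only [hcomb, smul_eq_mul] using
      hφ.2 hxm hz (sub_nonneg.2 ht.2) ht.1.le (sub_add_cancel 1 t)
  have hnorm : ‖xm + t • (z - xm) - a‖ ^ 2 =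
      ‖xm - a‖ ^ 2 + 2 * t * ⟪z - xm, xm - a⟫ + t ^ 2 * ‖z - xm‖ ^ 2 := by
    rw [show xm + t • (z - xm) - a = (xm - a) + t • (z - xm) by abel, norm_add_sq_real,
      real_inner_smul_right, norm_smul, mul_pow, Real.norm_eq_abs, sq_abs, real_inner_comm]
    ring
  have hle := isMinOn_iff.1 hmin _ hmem
  simp only [hnorm] at hle
  have : 0 ≤ t * (φ z - φ xm + c * ⟪z - xm, xm - a⟫ + t * (c / 2 * ‖z - xm‖ ^ 2)) := by
    linarith
  exact nonneg_of_mul_nonneg_right this ht.1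

theorem norm_le_of_lipschitz_conjugate {f fstar : E → ℝ} {S : Set E} {M : ℝ} (hM : 0 ≤ M)
    (hfy : ∀ w, ∀ x ∈ S, ⟪w, x⟫ - f x ≤ fstar w)
    (hLip : ∀ w w', |fstar w - fstar w'| ≤ M * ‖w - w'‖) {x : E} (hx : x ∈ S) : ‖x‖ ≤ M := by
  have hsq : ‖x‖ ^ 2 - M * ‖x‖ ≤ 0 := by
    refine neg_nonneg.1 (nonneg_of_forall_mem_Ioc_nonneg_add_mul (H := fstar 0 + f x) ?_)
    rintro t ⟨ht, -⟩
    have h1 := hfy (t⁻¹ • x) x hx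
    have h2 := (le_abs_self _).trans (hLip (t⁻¹ • x) 0)
    rw [real_inner_smul_left, real_inner_self_eq_norm_sq] at h1
    rw [sub_zero, norm_smul, Real.norm_eq_abs, abs_of_pos (inv_pos.2 ht)] at h2
    have h3 : t * (t⁻¹ * ‖x‖ ^ 2 - f x) ≤ t * (fstar 0 + M * (t⁻¹ * ‖x‖)) :=
      mul_le_mul_of_nonneg_left (by linarith) ht.le
    field_simp at h3
    linarith
  nlinarith [norm_nonneg x]

noncomputable def lagrangian (f : E → ℝ) (g : F → ℝ) (K : E →L[ℝ] F) (x : E) (y : F) : ℝ :=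
  f x + ⟪K x, y⟫ - g y

noncomputable def asgardCenter (τ : ℕ → ℝ) (x xhat : ℕ → E) (k : ℕ) : E :=
  (τ k)⁻¹ • (xhat k - (1 - τ k) • x k)

variable {f : E → ℝ} {Sf : Set E} {g : F → ℝ} {Sg : Set F} {K : E →L[ℝ] F}

theorem convexOn_lagrangian (hf : ConvexOn ℝ Sf f) (y : F) :
    ConvexOn ℝ Sf (fun x => lagrangian f g K x y) := by
  have hlin : ConvexOn ℝ Sf (fun x => ⟪K x, y⟫) :=
    ((innerₗ F y).comp K.toLinearMap).convexOn hf.1 |>.congr fun x _ => by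
      simp [real_inner_comm]
  refine ((hf.add hlin).add_const (-g y)).congr fun x _ => ?_
  simp only [Pi.add_apply, lagrangian]
  ring

theorem concaveOn_lagrangian (hg : ConvexOn ℝ Sg g) (x : E) :
    ConcaveOn ℝ Sg (lagrangian f g K x) := by
  have hlin : ConcaveOn ℝ Sg (fun y => ⟪K x, y⟫) := (innerₗ F (K x)).concaveOn hg.1
  refine ((hlin.add hg.neg).add_const (f x)).congr fun y _ => ?_
  simp only [Pi.add_apply, Pi.neg_apply, lagrangian]
  ring

theorem ContinuousLinearMap.inner_apply_le_of_sq_opNorm_le (K : E →L[ℝ] F) {β L : ℝ}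
    (hβ : 0 < β) (hLβ : ‖K‖ ^ 2 ≤ L * β) (u : E) (w : F) :
    ⟪K u, w⟫ ≤ β / 2 * ‖w‖ ^ 2 + L / 2 * ‖u‖ ^ 2 := by
  have hCS : ⟪K u, w⟫ ≤ ‖K‖ * ‖u‖ * ‖w‖ :=
    (real_inner_le_norm _ _).trans (mul_le_mul_of_nonneg_right (K.le_opNorm u) (norm_nonneg w))
  have hsq : 0 ≤ (β * ‖w‖ - ‖K‖ * ‖u‖) ^ 2 + (L * β - ‖K‖ ^ 2) * ‖u‖ ^ 2 :=
    add_nonneg (sq_nonneg _) (mul_nonneg (sub_nonneg.2 hLβ) (sq_nonneg _))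
  nlinarith

variable [CompleteSpace E] [CompleteSpace F]

theorem lagrangian_sub_le_of_isMaxOn_of_isMinOn (hf : ConvexOn ℝ Sf f) (hg : ConvexOn ℝ Sg g)
    {β L : ℝ} (hβ : 0 < β) (hLβ : ‖K‖ ^ 2 ≤ L * β) {xhat x' z : E} {ydot y' yp : F}
    (hyp : yp ∈ Sg)
    (hymax : IsMaxOn (fun y => ⟪K xhat, y⟫ - g y - β / 2 * ‖y - ydot‖ ^ 2) Sg yp)
    (hx' : x' ∈ Sf)
    (hxmin : IsMinOn (fun u => f u + ⟪K.adjoint yp, u⟫ + L / 2 * ‖u - xhat‖ ^ 2) Sf x')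
    (hz : z ∈ Sf) (hy' : y' ∈ Sg) :
    lagrangian f g K x' y' - β / 2 * ‖y' - ydot‖ ^ 2 ≤
      lagrangian f g K z yp - β / 2 * ‖yp - ydot‖ ^ 2 +
        L / 2 * (‖z - xhat‖ ^ 2 - ‖z - x'‖ ^ 2) := by
  have hymin : IsMinOn (fun u => -lagrangian f g K xhat u + β / 2 * ‖u - ydot‖ ^ 2) Sg yp :=
    isMinOn_iff.2 fun u hu => by
      have h := isMaxOn_iff.1 hymax u hu
      simp only [lagrangian]
      linarith
  have hxmin' : IsMinOn (fun u => lagrangian f g K u yp + L / 2 * ‖u - xhat‖ ^ 2) Sf x' :=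
    isMinOn_iff.2 fun u hu => by
      have h := isMinOn_iff.1 hxmin u hu
      simp only [lagrangian, ContinuousLinearMap.adjoint_inner_left, real_inner_comm yp] at h ⊢
      linarith
  have hY := (concaveOn_lagrangian (K := K) (f := f) hg xhat).neg.add_half_mul_sq_le_of_isMinOn
    hyp hymin hy'
  have hX := (convexOn_lagrangian (K := K) (g := g) hf yp).add_half_mul_sq_le_of_isMinOn
    hx' hxmin' hz
  have hyoung := K.inner_apply_le_of_sq_opNorm_le hβ hLβ (x' - xhat) (y' - yp)
  simp only [Pi.neg_apply, lagrangian, map_sub, inner_sub_left, inner_sub_right] at hY hX hyoung ⊢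
  linarith

theorem lagrangian_sub_le_of_isMaxOn_of_isMinOn_of_mem_Ioc (hf : ConvexOn ℝ Sf f)
    (hg : ConvexOn ℝ Sg g) {β L τ : ℝ} (hβ : 0 < β) (hLβ : ‖K‖ ^ 2 ≤ L * β) (hτ : τ ∈ Ioc 0 1)
    {x xhat x' xx : E} {ydot y' yp : F} (hyp : yp ∈ Sg)
    (hymax : IsMaxOn (fun y => ⟪K xhat, y⟫ - g y - β / 2 * ‖y - ydot‖ ^ 2) Sg yp)
    (hx' : x' ∈ Sf)
    (hxmin : IsMinOn (fun u => f u + ⟪K.adjoint yp, u⟫ + L / 2 * ‖u - xhat‖ ^ 2) Sf x')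
    (hx : x ∈ Sf) (hxx : xx ∈ Sf) (hy' : y' ∈ Sg) :
    lagrangian f g K x' y' - β / 2 * ‖y' - ydot‖ ^ 2 ≤
      (1 - τ) * lagrangian f g K x yp + τ * lagrangian f g K xx yp - β / 2 * ‖yp - ydot‖ ^ 2 +
        L * τ ^ 2 / 2 * (‖xx - τ⁻¹ • (xhat - (1 - τ) • x)‖ ^ 2 -
          ‖xx - τ⁻¹ • (x' - (1 - τ) • x)‖ ^ 2) := by
  have hτ₁ : 0 ≤ 1 - τ := sub_nonneg.2 hτ.2
  have hz : (1 - τ) • x + τ • xx ∈ Sf := hf.1 hx hxx hτ₁ hτ.1.le (sub_add_cancel 1 τ)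
  have hnorm (u : E) : ‖(1 - τ) • x + τ • xx - u‖ ^ 2 =
      τ ^ 2 * ‖xx - τ⁻¹ • (u - (1 - τ) • x)‖ ^ 2 := by
    have h : (1 - τ) • x + τ • xx - u = τ • (xx - τ⁻¹ • (u - (1 - τ) • x)) := by
      rw [smul_sub, smul_inv_smul₀ hτ.1.ne']
      module
    rw [h, norm_smul, mul_pow, Real.norm_eq_abs, sq_abs]
  have hstep := lagrangian_sub_le_of_isMaxOn_of_isMinOn hf hg hβ hLβ hyp hymax hx' hxmin hz hy'
  have hconv := (convexOn_lagrangian (K := K) (g := g) hf yp).2 hx hxx hτ₁ hτ.1.le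
    (sub_add_cancel 1 τ)
  rw [hnorm, hnorm] at hstep
  simp only [smul_eq_mul] at hconv
  linarith

structure IsAsgardRun (f : E → ℝ) (Sf : Set E) (g : F → ℝ) (Sg : Set F) (K : E →L[ℝ] F)
    (τ β L η : ℕ → ℝ) (ydot : F) (x xhat : ℕ → E) (y ytil : ℕ → F) : Prop where
  x_zero_mem : x 0 ∈ Sf
  xhat_zero : xhat 0 = x 0
  y_succ : ∀ k, y (k + 1) ∈ Sg ∧
    IsMaxOn (fun z => ⟪K (xhat k), z⟫ - g z - β k / 2 * ‖z - ydot‖ ^ 2) Sg (y (k + 1))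
  x_succ : ∀ k, x (k + 1) ∈ Sf ∧
    IsMinOn (fun z => f z + ⟪K.adjoint (y (k + 1)), z⟫ + L k / 2 * ‖z - xhat k‖ ^ 2) Sf
      (x (k + 1))
  xhat_succ : ∀ k, xhat (k + 1) = x (k + 1) + η (k + 1) • (x (k + 1) - x k)
  ytil_succ : ∀ k, ytil (k + 1) = (1 - τ k) • ytil k + τ k • y (k + 1)

namespace IsAsgardRun

variable {τ β L η : ℕ → ℝ} {ydot : F} {x xhat : ℕ → E} {y ytil : ℕ → F}

theorem x_mem (hr : IsAsgardRun f Sf g Sg K τ β L η ydot x xhat y ytil) (k : ℕ) : x k ∈ Sf := by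
  cases k with
  | zero => exact hr.x_zero_mem
  | succ k => exact (hr.x_succ k).1

theorem ytil_succ_mem (hr : IsAsgardRun f Sf g Sg K τ β L η ydot x xhat y ytil)
    {c : ℝ} (hp : IsAsgardParams c τ β L η) (hSg : Convex ℝ Sg) (k : ℕ) : ytil (k + 1) ∈ Sg := by
  induction k with
  | zero => simpa [hr.ytil_succ 0, hp.τ_zero] using (hr.y_succ 0).1
  | succ k ih =>
    rw [hr.ytil_succ]
    exact hSg ih (hr.y_succ _).1 (sub_nonneg.2 (hp.τ_mem _).2) (hp.τ_mem _).1.le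
      (sub_add_cancel 1 _)

/-- The extrapolation weight `η` is chosen so that the centre moves to
`τ_k⁻¹ (x_{k+1} - (1 - τ_k) x_k)`; when `K = 0` the rule for `η` degenerates, but then `L = 0`. -/
theorem L_zero_mul_sq_norm_sub_asgardCenter_succ
    (hr : IsAsgardRun f Sf g Sg K τ β L η ydot x xhat y ytil)
    (hp : IsAsgardParams ‖K‖ τ β L η) (u : E) (k : ℕ) :
    L 0 * ‖u - asgardCenter τ x xhat (k + 1)‖ ^ 2 =
      L 0 * ‖u - (τ k)⁻¹ • (x (k + 1) - (1 - τ k) • x k)‖ ^ 2 := by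
  rcases eq_or_ne ‖K‖ 0 with hK | hK
  · simp [hp.L_eq, hK]
  have hτ := (hp.τ_mem k).1.ne'
  have hτ' := (hp.τ_mem (k + 1)).1.ne'
  rw [asgardCenter, hr.xhat_succ, hp.η_succ_eq hK]
  congr 3
  match_scalars
  all_goals field_simp
  ring

theorem asgardWeight_mul_lagrangian_le (hr : IsAsgardRun f Sf g Sg K τ β L η ydot x xhat y ytil)
    (hp : IsAsgardParams ‖K‖ τ β L η) (hf : ConvexOn ℝ Sf f) (hg : ConvexOn ℝ Sg g)
    {xx : E} (hxx : xx ∈ Sf) (m : ℕ) :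
    ∀ y' ∈ Sg, asgardWeight τ β m * (lagrangian f g K (x (m + 1)) y' - β m / 2 * ‖y' - ydot‖ ^ 2) +
        L 0 / 2 * ‖xx - asgardCenter τ x xhat (m + 1)‖ ^ 2 ≤
      asgardWeight τ β m * lagrangian f g K xx (ytil (m + 1)) + L 0 / 2 * ‖xx - x 0‖ ^ 2 := by
  have hstep (k : ℕ) {y'} (hy' : y' ∈ Sg) :=
    lagrangian_sub_le_of_isMaxOn_of_isMinOn_of_mem_Ioc hf hg (hp.β_pos k) (hp.L_mul_β k).ge
      (hp.τ_mem k) (hr.y_succ k).1 (hr.y_succ k).2 (hr.x_succ k).1 (hr.x_succ k).2 (hr.x_mem k)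
      hxx hy'
  have hcenter (k : ℕ) := hr.L_zero_mul_sq_norm_sub_asgardCenter_succ hp xx k
  induction m with
  | zero =>
    intro y' hy'
    have h := hstep 0 hy'
    have hc := hcenter 0
    simp only [hp.τ_zero, hr.xhat_zero, sub_self, zero_smul, sub_zero, inv_one, one_smul,
      one_pow, mul_one, zero_mul, zero_add, one_mul] at h hc
    have hytil : ytil 1 = y 1 := by simp [hr.ytil_succ 0, hp.τ_zero]
    rw [hp.asgardWeight_zero, hytil]
    have := mul_nonneg (hp.β_pos 0).le (sq_nonneg ‖y 1 - ydot‖)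
    linarith
  | succ m ih =>
    intro y' hy'
    have hW := (hp.asgardWeight_pos (m + 1)).le
    have hτ := hp.τ_mem (m + 1)
    have h := mul_le_mul_of_nonneg_left (hstep (m + 1) hy') hW
    have hih := ih (y (m + 1 + 1)) (hr.y_succ (m + 1)).1
    have hconc := mul_le_mul_of_nonneg_left ((concaveOn_lagrangian (f := f) (K := K) hg xx).2
      (hr.ytil_succ_mem hp hg.1 m) (hr.y_succ (m + 1)).1 (sub_nonneg.2 hτ.2) hτ.1.le
      (sub_add_cancel 1 _)) hW
    have hβ := mul_le_mul_of_nonneg_left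
      (mul_le_mul_of_nonneg_right (hp.one_sub_τ_succ_mul_β_le m) (sq_nonneg ‖y (m + 1 + 1) - ydot‖))
      hW
    have hc := hcenter (m + 1)
    rw [← hp.asgardWeight_succ_mul m] at hih
    rw [← hp.asgardWeight_mul_L (m + 1)] at hih hc ⊢
    rw [← hr.ytil_succ] at hconc
    simp only [smul_eq_mul] at hconc
    simp only [asgardCenter] at hih hc ⊢
    linarith

theorem lagrangian_sub_le (hr : IsAsgardRun f Sf g Sg K τ β L η ydot x xhat y ytil)
    (hp : IsAsgardParams ‖K‖ τ β L η) (hf : ConvexOn ℝ Sf f) (hg : ConvexOn ℝ Sg g)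
    {xx : E} (hxx : xx ∈ Sf) (m : ℕ) {y' : F} (hy' : y' ∈ Sg) :
    lagrangian f g K (x (m + 1)) y' - β m / 2 * ‖y' - ydot‖ ^ 2 ≤
      lagrangian f g K xx (ytil (m + 1)) + ‖K‖ ^ 2 / (2 * β 0 * (m + 1)) * ‖xx - x 0‖ ^ 2 := by
  have h := hr.asgardWeight_mul_lagrangian_le hp hf hg hxx m y' hy'
  have hβ0 := hp.β_zero_pos
  set C := ‖K‖ ^ 2 / (2 * β 0 * (m + 1)) with hC
  have hL0 : L 0 / 2 = (m + 1) * C := by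
    rw [hp.L_eq, hC]
    field_simp
  rw [hL0] at h
  have hwC := mul_le_mul_of_nonneg_right (hp.succ_le_asgardWeight m)
    (by positivity : 0 ≤ C * ‖xx - x 0‖ ^ 2)
  have hcenter : 0 ≤ (m + 1) * C * ‖xx - asgardCenter τ x xhat (m + 1)‖ ^ 2 := by positivity
  refine le_of_mul_le_mul_left ?_ (hp.asgardWeight_pos m)
  linarith

theorem dual_sub_le (hr : IsAsgardRun f Sf g Sg K τ β L η ydot x xhat y ytil)
    (hp : IsAsgardParams ‖K‖ τ β L η) (hf : ConvexOn ℝ Sf f) (hg : ConvexOn ℝ Sg g)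
    {fstar : E → ℝ} (hfstar : ∀ w, IsLUB {r : ℝ | ∃ x' ∈ Sf, r = ⟪w, x'⟫ - f x'} (fstar w))
    {R : ℝ} (hR : ∀ x' ∈ Sf, ‖x'‖ ≤ R) {ys : F} (hys : ys ∈ Sg) (m : ℕ) :
    fstar (-K.adjoint (ytil (m + 1))) + g (ytil (m + 1)) - (fstar (-K.adjoint ys) + g ys) ≤
      ‖K‖ ^ 2 / (2 * β 0 * (m + 1)) * (‖x 0‖ + R) ^ 2 + β 0 / (m + 2) * ‖ydot - ys‖ ^ 2 := by
  have hinner (u : E) (v : F) : ⟪-K.adjoint v, u⟫ = -⟪K u, v⟫ := by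
    rw [inner_neg_left, ContinuousLinearMap.adjoint_inner_left, real_inner_comm]
  have hβ0 := hp.β_zero_pos
  have hβ : β m / 2 * ‖ys - ydot‖ ^ 2 ≤ β 0 / (m + 2) * ‖ydot - ys‖ ^ 2 := by
    rw [norm_sub_rev]
    refine mul_le_mul_of_nonneg_right ?_ (sq_nonneg _)
    rw [le_div_iff₀ (by positivity)]
    linarith [hp.β_mul_le m]
  have hfy : -lagrangian f g K (x (m + 1)) ys - g ys ≤ fstar (-K.adjoint ys) := by
    have h := (hfstar (-K.adjoint ys)).1 ⟨x (m + 1), hr.x_mem _, rfl⟩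
    rw [hinner] at h
    unfold lagrangian
    linarith
  suffices fstar (-K.adjoint (ytil (m + 1))) ≤ fstar (-K.adjoint ys) + g ys - g (ytil (m + 1)) +
      ‖K‖ ^ 2 / (2 * β 0 * (m + 1)) * (‖x 0‖ + R) ^ 2 + β 0 / (m + 2) * ‖ydot - ys‖ ^ 2 by
    linarith
  refine (hfstar _).2 ?_
  rintro _ ⟨xx, hxx, rfl⟩
  have hmain := hr.lagrangian_sub_le hp hf hg hxx m hys
  have hdist : ‖xx - x 0‖ ^ 2 ≤ (‖x 0‖ + R) ^ 2 := by
    refine pow_le_pow_left₀ (norm_nonneg _) ((norm_sub_le _ _).trans ?_) 2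
    linarith [hR xx hxx]
  have hdist' := mul_le_mul_of_nonneg_left hdist
    (by positivity : 0 ≤ ‖K‖ ^ 2 / (2 * β 0 * (m + 1)))
  rw [hinner]
  unfold lagrangian at hfy hmain
  linarith

end IsAsgardRun

end Asgard

theorem stmt6_general {p n : ℕ}
    (f : EuclideanSpace ℝ (Fin p) → ℝ) (Sf : Set (EuclideanSpace ℝ (Fin p)))
    (gstar : EuclideanSpace ℝ (Fin n) → ℝ) (Sg : Set (EuclideanSpace ℝ (Fin n)))
    (K : EuclideanSpace ℝ (Fin p) →L[ℝ] EuclideanSpace ℝ (Fin n))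
    (hf : ConvexOn ℝ Sf f) (hgstar : ConvexOn ℝ Sg gstar)
    -- `f*` is the Fenchel conjugate of `f`; it is `M_{f*}`-Lipschitz (hence finite-valued)
    (fstar : EuclideanSpace ℝ (Fin p) → ℝ)
    (hfstar : ∀ w, IsLUB {r : ℝ | ∃ x' ∈ Sf, r = ⟪w, x'⟫ - f x'} (fstar w))
    (Mf : ℝ) (hMf : 0 ≤ Mf)
    (hfLip : ∀ w w' : EuclideanSpace ℝ (Fin p), |fstar w - fstar w'| ≤ Mf * ‖w - w'‖)
    (ys : EuclideanSpace ℝ (Fin n))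
    (hys : ys ∈ Sg)
    -- parameters of ASGARD+
    (τ β L η : ℕ → ℝ)
    (hτ0 : τ 0 = 1)
    (hτ : ∀ k, τ (k + 1) ∈ Ioo (0 : ℝ) 1 ∧
      (τ (k + 1)) ^ 3 + (τ (k + 1)) ^ 2 + (τ k) ^ 2 * τ (k + 1) - (τ k) ^ 2 = 0)
    (hβ0 : 0 < β 0)
    (hβ : ∀ k, β (k + 1) = β k / (1 + τ (k + 1)))
    (hL : ∀ k, L k = ‖K‖ ^ 2 / β k)
    (hη : ∀ k, η (k + 1) = (1 - τ k) * τ k / ((τ k) ^ 2 + (L (k + 1) / L k) * τ (k + 1)))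
    -- the iterates of ASGARD+
    (ydot : EuclideanSpace ℝ (Fin n))
    (x xhat : ℕ → EuclideanSpace ℝ (Fin p)) (yseq ytil : ℕ → EuclideanSpace ℝ (Fin n))
    (hx0 : x 0 ∈ Sf) (hxhat0 : xhat 0 = x 0)
    (hyup : ∀ k, yseq (k + 1) ∈ Sg ∧
      IsMaxOn (fun z => ⟪K (xhat k), z⟫ - gstar z - β k / 2 * ‖z - ydot‖ ^ 2) Sg
        (yseq (k + 1)))
    (hxup : ∀ k, x (k + 1) ∈ Sf ∧
      IsMinOn (fun z => f z + ⟪(ContinuousLinearMap.adjoint K) (yseq (k + 1)), z⟫ +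
        L k / 2 * ‖z - xhat k‖ ^ 2) Sf (x (k + 1)))
    (hxhat : ∀ k, xhat (k + 1) = x (k + 1) + η (k + 1) • (x (k + 1) - x k))
    (hytil : ∀ k, ytil (k + 1) = (1 - τ k) • ytil k + τ k • yseq (k + 1)) :
    ∀ k : ℕ, 1 ≤ k →
      (fstar (-((ContinuousLinearMap.adjoint K) (ytil k))) + gstar (ytil k)) -
        (fstar (-((ContinuousLinearMap.adjoint K) ys)) + gstar ys) ≤
        ‖K‖ ^ 2 / (2 * β 0 * (k : ℝ)) * (‖x 0‖ + Mf) ^ 2 +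
        β 0 / ((k : ℝ) + 1) * ‖ydot - ys‖ ^ 2 := by
  intro k hk
  obtain ⟨m, rfl⟩ : ∃ m, k = m + 1 := ⟨k - 1, by omega⟩
  have hr : IsAsgardRun f Sf gstar Sg K τ β L η ydot x xhat yseq ytil :=
    ⟨hx0, hxhat0, hyup, hxup, hxhat, hytil⟩
  have hp : IsAsgardParams ‖K‖ τ β L η := ⟨hτ0, hτ, hβ0, hβ, hL, hη⟩
  have hR (x' : EuclideanSpace ℝ (Fin p)) (hx' : x' ∈ Sf) : ‖x'‖ ≤ Mf :=
    norm_le_of_lipschitz_conjugate hMf (fun w x' hx' => (hfstar w).1 ⟨x', hx', rfl⟩) hfLip hx'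
  push_cast
  rw [show (m : ℝ) + 1 + 1 = m + 2 by ring]
  exact hr.dual_sub_le hp hf hgstar hfstar hR hys m

/-- Theorem 1(c): dual objective residual bound of ASGARD+ in the
general convex case `μ_f = μ_{g*} = 0`, with `f*` being `M_{f*}`-Lipschitz continuous.
For all `k ≥ 1`, `D(ỹ^k) - D⋆ ≤ (‖K‖²/(2β₀k))(‖x⁰‖+M_{f*})² + (β₀/(k+1))‖ẏ-y⋆‖²`,
where `D(y) = f*(-Kᵀy) + g*(y)` and `D⋆ = D(y⋆)`. -/
theorem stmt6 {p n : ℕ}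
    (f : EuclideanSpace ℝ (Fin p) → ℝ) (Sf : Set (EuclideanSpace ℝ (Fin p)))
    (gstar : EuclideanSpace ℝ (Fin n) → ℝ) (Sg : Set (EuclideanSpace ℝ (Fin n)))
    (K : EuclideanSpace ℝ (Fin p) →L[ℝ] EuclideanSpace ℝ (Fin n))
    (hSf : Convex ℝ Sf) (hSg : Convex ℝ Sg)
    (hSfc : IsClosed Sf) (hSgc : IsClosed Sg)
    (hf : ConvexOn ℝ Sf f) (hgstar : ConvexOn ℝ Sg gstar)
    -- `f*` is the Fenchel conjugate of `f`; it is `M_{f*}`-Lipschitz (hence finite-valued)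
    (fstar : EuclideanSpace ℝ (Fin p) → ℝ)
    (hfstar : ∀ w, IsLUB {r : ℝ | ∃ x' ∈ Sf, r = ⟪w, x'⟫ - f x'} (fstar w))
    (Mf : ℝ) (hMf : 0 ≤ Mf)
    (hfLip : ∀ w w' : EuclideanSpace ℝ (Fin p), |fstar w - fstar w'| ≤ Mf * ‖w - w'‖)
    -- a saddle point of the Lagrangian exists
    (xs : EuclideanSpace ℝ (Fin p)) (ys : EuclideanSpace ℝ (Fin n))
    (hxs : xs ∈ Sf) (hys : ys ∈ Sg)
    (hsaddle : ∀ x ∈ Sf, ∀ y ∈ Sg,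
      f xs + ⟪K xs, y⟫ - gstar y ≤ f xs + ⟪K xs, ys⟫ - gstar ys ∧
      f xs + ⟪K xs, ys⟫ - gstar ys ≤ f x + ⟪K x, ys⟫ - gstar ys)
    -- parameters of ASGARD+
    (τ β L η : ℕ → ℝ)
    (hτ0 : τ 0 = 1)
    (hτ : ∀ k, τ (k + 1) ∈ Ioo (0 : ℝ) 1 ∧
      (τ (k + 1)) ^ 3 + (τ (k + 1)) ^ 2 + (τ k) ^ 2 * τ (k + 1) - (τ k) ^ 2 = 0)
    (hβ0 : 0 < β 0)
    (hβ : ∀ k, β (k + 1) = β k / (1 + τ (k + 1)))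
    (hL : ∀ k, L k = ‖K‖ ^ 2 / β k)
    (hη : ∀ k, η (k + 1) = (1 - τ k) * τ k / ((τ k) ^ 2 + (L (k + 1) / L k) * τ (k + 1)))
    -- the iterates of ASGARD+
    (ydot : EuclideanSpace ℝ (Fin n))
    (x xhat : ℕ → EuclideanSpace ℝ (Fin p)) (yseq ytil : ℕ → EuclideanSpace ℝ (Fin n))
    (hx0 : x 0 ∈ Sf) (hxhat0 : xhat 0 = x 0) (hytil0 : ytil 0 ∈ Sg)
    (hyup : ∀ k, yseq (k + 1) ∈ Sg ∧
      IsMaxOn (fun z => ⟪K (xhat k), z⟫ - gstar z - β k / 2 * ‖z - ydot‖ ^ 2) Sg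
        (yseq (k + 1)))
    (hxup : ∀ k, x (k + 1) ∈ Sf ∧
      IsMinOn (fun z => f z + ⟪(ContinuousLinearMap.adjoint K) (yseq (k + 1)), z⟫ +
        L k / 2 * ‖z - xhat k‖ ^ 2) Sf (x (k + 1)))
    (hxhat : ∀ k, xhat (k + 1) = x (k + 1) + η (k + 1) • (x (k + 1) - x k))
    (hytil : ∀ k, ytil (k + 1) = (1 - τ k) • ytil k + τ k • yseq (k + 1)) :
    ∀ k : ℕ, 1 ≤ k →
      (fstar (-((ContinuousLinearMap.adjoint K) (ytil k))) + gstar (ytil k)) -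
        (fstar (-((ContinuousLinearMap.adjoint K) ys)) + gstar ys) ≤
        ‖K‖ ^ 2 / (2 * β 0 * (k : ℝ)) * (‖x 0‖ + Mf) ^ 2 +
        β 0 / ((k : ℝ) + 1) * ‖ydot - ys‖ ^ 2 :=
  stmt6_general f Sf gstar Sg K hf hgstar fstar hfstar Mf hMf hfLip ys hys τ β L η hτ0 hτ hβ0 hβ hL
    hη ydot x xhat yseq ytil hx0 hxhat0 hyup hxup hxhat hytil
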